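/- The presented group on five generators x₁, x₂, x₃, x₄, x₅ with defining relations x₅x₄x₃x₂x₁ = e, x₄ = x₅, x₁ = x₄x₃x₄⁻¹, x₂x₄x₃ = x₄x₃x₂, x₄x₃x₂x₄x₃ = x₃x₂x₄x₃x₄, x₁ = x₂⁻¹x₃⁻¹x₄⁻¹x₃x₄x₃x₂, x₂⁻¹x₃⁻¹x₄x₃x₂ = x₁x₅x₁⁻¹, x₂x₁x₅ = x₁x₅x₂, x₁x₅x₂x₁x₅ = x₅x₂x₁x₅x₁ is isomorphic to the free group on two generators. -/
import Mathlib


namespace Stmt5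

/-- Generators `x₁, …, x₅` of the free group, indexed by `0, …, 4`. -/
def x (i : Fin 5) : FreeGroup (Fin 5) := FreeGroup.of i

/-- The relators corresponding to the nine defining relations. -/
def rels : Set (FreeGroup (Fin 5)) :=
  { x 4 * x 3 * x 2 * x 1 * x 0,
    x 3 * (x 4)⁻¹,
    x 0 * (x 3 * x 2 * (x 3)⁻¹)⁻¹,
    (x 1 * x 3 * x 2) * (x 3 * x 2 * x 1)⁻¹,
    (x 3 * x 2 * x 1 * x 3 * x 2) * (x 2 * x 1 * x 3 * x 2 * x 3)⁻¹,
    x 0 * ((x 1)⁻¹ * (x 2)⁻¹ * (x 3)⁻¹ * x 2 * x 3 * x 2 * x 1)⁻¹,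
    ((x 1)⁻¹ * (x 2)⁻¹ * x 3 * x 2 * x 1) * (x 0 * x 4 * (x 0)⁻¹)⁻¹,
    (x 1 * x 0 * x 4) * (x 0 * x 4 * x 1)⁻¹,
    (x 0 * x 4 * x 1 * x 0 * x 4) * (x 4 * x 1 * x 0 * x 4 * x 0)⁻¹ }

/-- abbreviations for the two free generators of the target -/
noncomputable def a : FreeGroup (Fin 2) := FreeGroup.of 0
noncomputable def b : FreeGroup (Fin 2) := FreeGroup.of 1

/-- images of the five generators -/
noncomputable def F : Fin 5 → FreeGroup (Fin 2) :=
  ![b * a * b⁻¹, a⁻¹ * b⁻¹ * a⁻¹ * b⁻¹, a, b, b]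

lemma F0 : F 0 = b * a * b⁻¹ := rfl
lemma F1 : F 1 = a⁻¹ * b⁻¹ * a⁻¹ * b⁻¹ := rfl
lemma F2 : F 2 = a := rfl
lemma F3 : F 3 = b := rfl
lemma F4 : F 4 = b := rfl

lemma hF : ∀ r ∈ rels, FreeGroup.lift F r = 1 := by
  intro r hr
  simp only [rels, Set.mem_insert_iff, Set.mem_singleton_iff] at hr
  rcases hr with rfl | rfl | rfl | rfl | rfl | rfl | rfl | rfl | rfl <;>
    simp only [x, map_mul, map_inv, FreeGroup.lift_apply_of, F0, F1, F2, F3, F4] <;> group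

lemma mk_rel {r : FreeGroup (Fin 5)} (h : r ∈ rels) : PresentedGroup.mk rels r = 1 :=
  (QuotientGroup.eq_one_iff r).mpr (Subgroup.subset_normalClosure h)

lemma mk_x (i : Fin 5) : PresentedGroup.mk rels (x i) = PresentedGroup.of i := rfl

open PresentedGroup in
lemma e2 : (of 3 : PresentedGroup rels) = of 4 := by
  have h := mk_rel (show x 3 * (x 4)⁻¹ ∈ rels by simp [rels])
  simp only [map_mul, map_inv, mk_x, mul_inv_eq_one] at h
  exact h

open PresentedGroup in
lemma e3 : (of 0 : PresentedGroup rels) = of 3 * of 2 * (of 3)⁻¹ := by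
  have h := mk_rel (show x 0 * (x 3 * x 2 * (x 3)⁻¹)⁻¹ ∈ rels by simp [rels])
  simp only [map_mul, map_inv, mk_x, mul_inv_eq_one] at h
  simpa using h

open PresentedGroup in
lemma e1 : (of 4 * of 3 * of 2 * of 1 * of 0 : PresentedGroup rels) = 1 := by
  have h := mk_rel (show x 4 * x 3 * x 2 * x 1 * x 0 ∈ rels by simp [rels])
  simpa only [map_mul, mk_x] using h

open PresentedGroup in
lemma eOf1 :
    (of 1 : PresentedGroup rels) = (of 2)⁻¹ * (of 3)⁻¹ * (of 2)⁻¹ * (of 3)⁻¹ := by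
  have h := e1
  rw [← e2, e3] at h
  calc (of 1 : PresentedGroup rels)
      = (of 3 * of 3 * of 2)⁻¹ *
        (of 3 * of 3 * of 2 * of 1 * (of 3 * of 2 * (of 3)⁻¹)) *
        (of 3 * of 2 * (of 3)⁻¹)⁻¹ := by group
    _ = _ := by rw [h]; group

noncomputable def φ : PresentedGroup rels →* FreeGroup (Fin 2) := PresentedGroup.toGroup hF

noncomputable def ψ : FreeGroup (Fin 2) →* PresentedGroup rels :=
  FreeGroup.lift ![PresentedGroup.of 2, PresentedGroup.of 3]

lemma ψa : ψ a = PresentedGroup.of 2 := FreeGroup.lift_apply_of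
lemma ψb : ψ b = PresentedGroup.of 3 := FreeGroup.lift_apply_of

theorem presentation_iso_free :
    Nonempty (PresentedGroup rels ≃* FreeGroup (Fin 2)) := by
  refine ⟨MonoidHom.toMulEquiv φ ψ ?_ ?_⟩
  · ext i
    show ψ (φ (PresentedGroup.of i)) = PresentedGroup.of i
    rw [show φ (PresentedGroup.of i) = F i from PresentedGroup.toGroup.of hF]
    fin_cases i
    · show ψ (F 0) = PresentedGroup.of 0
      rw [F0]
      simp only [map_mul, map_inv, ψa, ψb]
      exact e3.symm
    · show ψ (F 1) = PresentedGroup.of 1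
      rw [F1]
      simp only [map_mul, map_inv, ψa, ψb]
      exact eOf1.symm
    · show ψ (F 2) = PresentedGroup.of 2
      rw [F2, ψa]
    · show ψ (F 3) = PresentedGroup.of 3
      rw [F3, ψb]
    · show ψ (F 4) = PresentedGroup.of 4
      rw [F4, ψb]; exact e2
  · ext i
    show φ (ψ (FreeGroup.of i)) = FreeGroup.of i
    fin_cases i
    · show φ (ψ (FreeGroup.of 0)) = FreeGroup.of 0
      rw [show (FreeGroup.of (0 : Fin 2)) = a from rfl, ψa]
      exact PresentedGroup.toGroup.of hF
    · show φ (ψ (FreeGroup.of 1)) = FreeGroup.of 1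
      rw [show (FreeGroup.of (1 : Fin 2)) = b from rfl, ψb]
      exact PresentedGroup.toGroup.of hF

end Stmt5
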